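/- Let ν ∈ ℤ_{≥0} and let V(ν) be the ℂ(q)-vector space with basis {Y^{(k)}v_ν : 0 ≤ k ≤ 2ν} and Hermitian form determined by (Y^{(k)}v_ν, Y^{(k)}v_ν) = [2ν choose k]_q · {ν}/{ν−k}, where [m choose k]_q is the Gaussian binomial coefficient in balanced form and {a} := q^a + q^{−a}. Then deg(Y^{(k)}v_ν) := (1/2)deg((Y^{(k)}v_ν, Y^{(k)}v_ν)) equals (1/2)(2ν−k+1)k if k ≤ ν and (1/2)(2ν−k)(k+1) if k ≥ ν, and the leading coefficient lc(Y^{(k)}v_ν) equals 1/√2 if k = ν > 0 and equals 1 otherwise. -/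
import Mathlib

set_option maxHeartbeats 1000000
set_option synthInstance.maxHeartbeats 1000000

noncomputable section

/-- `K = ℂ(q)`. -/
abbrev Kq : Type := RatFunc ℂ

/-- The variable `q`. -/
def qq : Kq := RatFunc.X

/-- The quantum integer `[n] = (qⁿ − q⁻ⁿ)/(q − q⁻¹)`. -/
noncomputable def qint (n : ℤ) : Kq := (qq ^ n - qq ^ (-n)) / (qq - qq⁻¹)

/-- The quantum factorial `[k]!`. -/
noncomputable def qfac (k : ℕ) : Kq := ∏ i ∈ Finset.range k, qint (i + 1)

/-- The balanced Gaussian binomial coefficient `[m choose k] = [m]!/([m−k]![k]!)`. -/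
noncomputable def qbinom (m k : ℕ) : Kq := qfac m / (qfac (m - k) * qfac k)

/-- `{a} = q^a + q^{−a}`. -/
noncomputable def qbrace (a : ℤ) : Kq := qq ^ a + qq ^ (-a)

/-- The leading coefficient of a rational function. -/
noncomputable def lcoef (c : Kq) : ℂ := c.num.leadingCoeff / c.denom.leadingCoeff

/-- The squared norm `(Y^{(k)}v_ν, Y^{(k)}v_ν) = [2ν choose k]·{ν}/{ν−k}`. -/
noncomputable def normsq (ν k : ℕ) : Kq :=
  qbinom (2 * ν) k * qbrace ν / qbrace ((ν : ℤ) - k)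

/-- `deg(Y^{(k)}v_ν) = (1/2)·deg((Y^{(k)}v_ν, Y^{(k)}v_ν))`. -/
noncomputable def degY (ν k : ℕ) : ℚ := ((normsq ν k).intDegree : ℚ) / 2

/-- `lc(Y^{(k)}v_ν) = lc((Y^{(k)}v_ν, Y^{(k)}v_ν))^{1/2}`. -/
noncomputable def lcY (ν k : ℕ) : ℝ := Real.sqrt ((lcoef (normsq ν k)).re)

open Polynomial

/-- leading coefficient of an exact polynomial quotient -/
lemma lc_div_dvd (p g : Polynomial ℂ) (hg : g ≠ 0) (hdvd : g ∣ p) :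
    (p / g).leadingCoeff = p.leadingCoeff / g.leadingCoeff := by
  have h := EuclideanDomain.mul_div_cancel' hg hdvd
  have h2 := congrArg Polynomial.leadingCoeff h
  rw [Polynomial.leadingCoeff_mul] at h2
  field_simp [Polynomial.leadingCoeff_ne_zero.mpr hg]
  linear_combination h2

lemma lcoef_div_polys (p q : Polynomial ℂ) (hq : q ≠ 0) :
    lcoef (algebraMap (Polynomial ℂ) Kq p / algebraMap (Polynomial ℂ) Kq q) =
      p.leadingCoeff / q.leadingCoeff := by
  have hg : GCDMonoid.gcd p q ≠ 0 := gcd_ne_zero_of_right hq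
  have hgl : (GCDMonoid.gcd p q).leadingCoeff ≠ 0 := Polynomial.leadingCoeff_ne_zero.mpr hg
  have hqd : q / GCDMonoid.gcd p q ≠ 0 := right_div_gcd_ne_zero hq
  have hqdl : (q / GCDMonoid.gcd p q).leadingCoeff ≠ 0 := Polynomial.leadingCoeff_ne_zero.mpr hqd
  have hql : q.leadingCoeff ≠ 0 := Polynomial.leadingCoeff_ne_zero.mpr hq
  unfold lcoef
  rw [RatFunc.num_div, RatFunc.denom_div p hq, Polynomial.leadingCoeff_mul,
    Polynomial.leadingCoeff_mul, Polynomial.leadingCoeff_C,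
    lc_div_dvd p _ hg (gcd_dvd_left p q), lc_div_dvd q _ hg (gcd_dvd_right p q)]
  field_simp

lemma lcoef_algebraMap (p : Polynomial ℂ) :
    lcoef (algebraMap (Polynomial ℂ) Kq p) = p.leadingCoeff := by
  unfold lcoef
  rw [RatFunc.num_algebraMap, RatFunc.denom_algebraMap]
  simp

lemma lcoef_mul {x y : Kq} (hx : x ≠ 0) (hy : y ≠ 0) :
    lcoef (x * y) = lcoef x * lcoef y := by
  have hxy : x * y = algebraMap (Polynomial ℂ) Kq (x.num * y.num) /
      algebraMap (Polynomial ℂ) Kq (x.denom * y.denom) := by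
    conv_lhs => rw [← RatFunc.num_div_denom x, ← RatFunc.num_div_denom y]
    rw [div_mul_div_comm, ← map_mul, ← map_mul]
  rw [hxy, lcoef_div_polys _ _ (mul_ne_zero x.denom_ne_zero y.denom_ne_zero),
    Polynomial.leadingCoeff_mul, Polynomial.leadingCoeff_mul]
  unfold lcoef
  rw [div_mul_div_comm]

lemma lcoef_div {x y : Kq} (hy : y ≠ 0) :
    lcoef (x / y) = lcoef x / lcoef y := by
  by_cases hx : x = 0
  · simp [hx, lcoef]
  have hxy : x / y = algebraMap (Polynomial ℂ) Kq (x.num * y.denom) /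
      algebraMap (Polynomial ℂ) Kq (x.denom * y.num) := by
    conv_lhs => rw [← RatFunc.num_div_denom x, ← RatFunc.num_div_denom y]
    rw [div_div_div_eq, ← map_mul, ← map_mul]
  rw [hxy, lcoef_div_polys _ _ (mul_ne_zero x.denom_ne_zero (RatFunc.num_ne_zero hy)),
    Polynomial.leadingCoeff_mul, Polynomial.leadingCoeff_mul]
  unfold lcoef
  rw [div_div_div_eq]

lemma RF.intDegree_div {x y : Kq} (hx : x ≠ 0) (hy : y ≠ 0) :
    (x / y).intDegree = x.intDegree - y.intDegree := by
  have h := RatFunc.intDegree_mul (div_ne_zero hx hy) hy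
  rw [div_mul_cancel₀ _ hy] at h
  omega

lemma qq_ne : (qq : Kq) ≠ 0 := RatFunc.X_ne_zero

lemma Xsq_ne : ((X : Polynomial ℂ) ^ 2 - 1) ≠ 0 := by
  intro h
  simpa [Polynomial.coeff_one] using congrArg (Polynomial.coeff · 2) h

lemma qq_sq_ne : (qq : Kq) ^ 2 - 1 ≠ 0 := by
  intro h
  apply Xsq_ne
  apply RatFunc.algebraMap_injective ℂ
  rw [map_sub, map_pow, map_one, RatFunc.algebraMap_X]
  simpa [qq] using h

lemma Xpow_sub_one_ne (n : ℕ) (hn : 0 < n) : ((X : Polynomial ℂ) ^ n - 1) ≠ 0 := by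
  intro h
  have h2 := congrArg (fun p => Polynomial.coeff p n) h
  simp only [Polynomial.coeff_sub, Polynomial.coeff_X_pow, if_pos rfl,
    Polynomial.coeff_one, Polynomial.coeff_zero] at h2
  rw [if_neg (by omega : ¬ n = 0)] at h2
  norm_num at h2

lemma Xpow_add_one_ne' (n : ℕ) : ((X : Polynomial ℂ) ^ n + 1) ≠ 0 := by
  intro h
  have h2 := congrArg (fun p => Polynomial.coeff p n) h
  simp only [Polynomial.coeff_add, Polynomial.coeff_X_pow, if_pos rfl,
    Polynomial.coeff_one, Polynomial.coeff_zero] at h2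
  by_cases hn : n = 0 <;> simp [hn] at h2 <;> norm_num at h2

lemma mapne {p : Polynomial ℂ} (hp : p ≠ 0) : algebraMap (Polynomial ℂ) Kq p ≠ 0 := by
  intro h
  exact hp (RatFunc.algebraMap_injective ℂ (by rw [h, map_zero]))

lemma qint_eq (n : ℕ) :
    qint ((n : ℤ) + 1) = algebraMap (Polynomial ℂ) Kq (X * (X ^ (2 * n + 2) - 1)) /
      algebraMap (Polynomial ℂ) Kq (X ^ (n + 1) * (X ^ 2 - 1)) := by
  unfold qint
  rw [show ((n : ℤ) + 1) = ((n + 1 : ℕ) : ℤ) by push_cast; ring, zpow_neg, zpow_natCast]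
  rw [map_mul, map_mul, map_sub, map_sub, map_pow, map_pow, map_pow, map_one,
    RatFunc.algebraMap_X]
  have h1 : (qq : Kq) ≠ 0 := qq_ne
  have h2 : (qq : Kq) ^ 2 - 1 ≠ 0 := qq_sq_ne
  have h3 : (qq : Kq) - qq⁻¹ ≠ 0 := by
    have : (qq : Kq) - qq⁻¹ = (qq ^ 2 - 1) / qq := by field_simp
    rw [this]
    exact div_ne_zero h2 h1
  have hB : (RatFunc.X : Kq) ^ (n + 1) * (RatFunc.X ^ 2 - 1) ≠ 0 := by
    simp only [qq] at *
    exact mul_ne_zero (pow_ne_zero _ h1) h2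
  simp only [qq] at *
  rw [div_eq_div_iff h3 hB]
  field_simp
  ring

lemma qint_lcoef (n : ℕ) : lcoef (qint ((n : ℤ) + 1)) = 1 := by
  rw [qint_eq, lcoef_div_polys]
  · rw [Polynomial.leadingCoeff_mul, Polynomial.leadingCoeff_mul, Polynomial.leadingCoeff_X,
      Polynomial.leadingCoeff_X_pow]
    have h1 : ((X : Polynomial ℂ) ^ (2 * n + 2) - 1).leadingCoeff = 1 := by
      rw [show ((X : Polynomial ℂ) ^ (2 * n + 2) - 1) = X ^ (2 * n + 2) - C 1 by simp]
      exact Polynomial.leadingCoeff_X_pow_sub_C (by omega)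
    have h2 : ((X : Polynomial ℂ) ^ 2 - 1).leadingCoeff = 1 := by
      rw [show ((X : Polynomial ℂ) ^ 2 - 1) = X ^ 2 - C 1 by simp]
      exact Polynomial.leadingCoeff_X_pow_sub_C (by omega)
    rw [h1, h2]; norm_num
  · exact mul_ne_zero (pow_ne_zero _ Polynomial.X_ne_zero) Xsq_ne

lemma ne_zero_of_lcoef {x : Kq} (h : lcoef x ≠ 0) : x ≠ 0 := by
  intro hx
  apply h
  simp [hx, lcoef]

lemma qint_ne (n : ℕ) : qint ((n : ℤ) + 1) ≠ 0 :=
  ne_zero_of_lcoef (by rw [qint_lcoef]; norm_num)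

lemma qint_intDegree (n : ℕ) : (qint ((n : ℤ) + 1)).intDegree = n := by
  rw [qint_eq, RF.intDegree_div]
  · rw [RatFunc.intDegree_polynomial, RatFunc.intDegree_polynomial]
    have h1 : ((X : Polynomial ℂ) * (X ^ (2 * n + 2) - 1)).natDegree = 2 * n + 3 := by
      rw [Polynomial.natDegree_mul Polynomial.X_ne_zero (Xpow_sub_one_ne _ (by omega)),
        Polynomial.natDegree_X,
        show ((X : Polynomial ℂ) ^ (2 * n + 2) - 1) = X ^ (2 * n + 2) - C 1 by simp,
        Polynomial.natDegree_X_pow_sub_C]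
      omega
    have h2 : ((X : Polynomial ℂ) ^ (n + 1) * (X ^ 2 - 1)).natDegree = n + 3 := by
      rw [Polynomial.natDegree_mul (pow_ne_zero _ Polynomial.X_ne_zero) Xsq_ne,
        Polynomial.natDegree_X_pow,
        show ((X : Polynomial ℂ) ^ 2 - 1) = X ^ 2 - C 1 by simp,
        Polynomial.natDegree_X_pow_sub_C]
    rw [h1, h2]; omega
  · exact mapne (mul_ne_zero Polynomial.X_ne_zero (Xpow_sub_one_ne _ (by omega)))
  · exact mapne (mul_ne_zero (pow_ne_zero _ Polynomial.X_ne_zero) Xsq_ne)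

lemma qfac_lcoef (k : ℕ) : lcoef (qfac k) = 1 := by
  induction k with
  | zero => simp [qfac, lcoef]
  | succ n ih =>
    rw [qfac, Finset.prod_range_succ, ← qfac]
    rw [lcoef_mul (ne_zero_of_lcoef (by rw [ih]; norm_num)) (by exact_mod_cast qint_ne n), ih]
    rw [show ((n : ℤ) + 1) = ((n : ℕ) : ℤ) + 1 by push_cast; ring] at *
    rw [qint_lcoef n]
    norm_num

lemma qfac_ne (k : ℕ) : qfac k ≠ 0 := ne_zero_of_lcoef (by rw [qfac_lcoef]; norm_num)

lemma qfac_intDegree (k : ℕ) : (qfac k).intDegree = ∑ i ∈ Finset.range k, (i : ℤ) := by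
  induction k with
  | zero => simp [qfac]
  | succ n ih =>
    rw [qfac, Finset.prod_range_succ, ← qfac,
      RatFunc.intDegree_mul (qfac_ne n) (by exact_mod_cast qint_ne n), ih,
      Finset.sum_range_succ]
    congr 1
    exact_mod_cast qint_intDegree n

lemma sum_range_two (n : ℕ) : 2 * (∑ i ∈ Finset.range n, (i : ℤ)) = n * (n - 1) := by
  induction n with
  | zero => simp
  | succ m ih => rw [Finset.sum_range_succ]; push_cast at *; ring_nf; ring_nf at ih; omega

lemma qbinom_lcoef (m k : ℕ) : lcoef (qbinom m k) = 1 := by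
  unfold qbinom
  rw [lcoef_div (mul_ne_zero (qfac_ne _) (qfac_ne _)),
    lcoef_mul (qfac_ne _) (qfac_ne _), qfac_lcoef, qfac_lcoef, qfac_lcoef]
  norm_num

lemma qbinom_ne (m k : ℕ) : qbinom m k ≠ 0 :=
  ne_zero_of_lcoef (by rw [qbinom_lcoef]; norm_num)

lemma qbinom_intDegree (m k : ℕ) (hk : k ≤ m) :
    (qbinom m k).intDegree = (k : ℤ) * (m - k) := by
  unfold qbinom
  rw [RF.intDegree_div (qfac_ne _) (mul_ne_zero (qfac_ne _) (qfac_ne _)),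
    RatFunc.intDegree_mul (qfac_ne _) (qfac_ne _), qfac_intDegree, qfac_intDegree,
    qfac_intDegree]
  have h1 := sum_range_two m
  have h2 := sum_range_two (m - k)
  have h3 := sum_range_two k
  have hc : ((m - k : ℕ) : ℤ) = (m : ℤ) - k := by omega
  rw [hc] at h2
  nlinarith [h1, h2, h3]

lemma qbrace_eq (n : ℕ) :
    qbrace (n : ℤ) = algebraMap (Polynomial ℂ) Kq (X ^ (2 * n) + 1) /
      algebraMap (Polynomial ℂ) Kq (X ^ n) := by
  unfold qbrace
  rw [zpow_neg, zpow_natCast, map_add, map_pow, map_pow, map_one, RatFunc.algebraMap_X]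
  have h1 : (qq : Kq) ≠ 0 := qq_ne
  simp only [qq] at *
  rw [eq_div_iff (pow_ne_zero n h1)]
  field_simp
  ring

lemma Xpow_add_one_ne (n : ℕ) : ((X : Polynomial ℂ) ^ n + 1) ≠ 0 :=
  Xpow_add_one_ne' n

lemma qbrace_lcoef_pos (n : ℕ) (hn : 0 < n) : lcoef (qbrace (n : ℤ)) = 1 := by
  rw [qbrace_eq, lcoef_div_polys _ _ (pow_ne_zero _ Polynomial.X_ne_zero),
    Polynomial.leadingCoeff_X_pow,
    show ((X : Polynomial ℂ) ^ (2 * n) + 1) = X ^ (2 * n) + C 1 by simp,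
    Polynomial.leadingCoeff_X_pow_add_C (by omega)]
  norm_num

lemma qbrace_lcoef_zero : lcoef (qbrace (0 : ℤ)) = 2 := by
  rw [show (0 : ℤ) = ((0 : ℕ) : ℤ) by norm_num, qbrace_eq, lcoef_div_polys _ _
    (pow_ne_zero _ Polynomial.X_ne_zero)]
  norm_num
  rw [show (2 : Polynomial ℂ) = Polynomial.C 2 from (map_ofNat Polynomial.C 2).symm,
    Polynomial.leadingCoeff_C]

lemma qbrace_ne (a : ℤ) : qbrace a ≠ 0 := by
  rcases le_or_gt 0 a with h | h
  · obtain ⟨n, rfl⟩ := Int.eq_ofNat_of_zero_le h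
    rcases Nat.eq_zero_or_pos n with rfl | hn
    · exact ne_zero_of_lcoef (by rw [Nat.cast_zero, qbrace_lcoef_zero]; norm_num)
    · exact ne_zero_of_lcoef (by rw [qbrace_lcoef_pos n hn]; norm_num)
  · have : qbrace a = qbrace (-a) := by unfold qbrace; rw [neg_neg, add_comm]
    rw [this]
    obtain ⟨n, hn⟩ := Int.eq_ofNat_of_zero_le (by omega : (0:ℤ) ≤ -a)
    rw [hn]
    rcases Nat.eq_zero_or_pos n with rfl | hpos
    · exact ne_zero_of_lcoef (by rw [Nat.cast_zero, qbrace_lcoef_zero]; norm_num)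
    · exact ne_zero_of_lcoef (by rw [qbrace_lcoef_pos n hpos]; norm_num)

lemma qbrace_intDegree (n : ℕ) : (qbrace (n : ℤ)).intDegree = n := by
  rw [qbrace_eq, RF.intDegree_div, RatFunc.intDegree_polynomial, RatFunc.intDegree_polynomial,
    show ((X : Polynomial ℂ) ^ (2 * n) + 1) = X ^ (2 * n) + C 1 by simp,
    Polynomial.natDegree_X_pow_add_C, Polynomial.natDegree_X_pow]
  · omega
  · exact mapne (Xpow_add_one_ne (2 * n))
  · exact mapne (pow_ne_zero n Polynomial.X_ne_zero)

lemma qbrace_neg (a : ℤ) : qbrace (-a) = qbrace a := by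
  unfold qbrace; rw [neg_neg, add_comm]

/-- Equations (5.6) of the paper: `deg(Y^{(k)}v_ν)` equals `(1/2)(2ν−k+1)k` for `k ≤ ν`
and `(1/2)(2ν−k)(k+1)` for `k ≥ ν`, and `lc(Y^{(k)}v_ν)` equals `1/√2` if `k = ν > 0`
and `1` otherwise. -/
theorem statement10 (ν k : ℕ) (hk : k ≤ 2 * ν) :
    degY ν k = (if k ≤ ν then (((2 * ν : ℤ) - k + 1) * k : ℤ)
      else (((2 * ν : ℤ) - k) * (k + 1) : ℤ)) / 2 ∧
    lcY ν k = (if k = ν ∧ 0 < ν then (Real.sqrt 2)⁻¹ else 1) := by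
  -- rewrite qbrace ((ν:ℤ) - k) as qbrace of a natural number
  have habs : ∃ j : ℕ, qbrace ((ν : ℤ) - k) = qbrace (j : ℤ) ∧ (j : ℤ) = |(ν : ℤ) - k| := by
    rcases le_or_gt k ν with h | h
    · exact ⟨ν - k, by rw [show ((ν : ℤ) - k) = ((ν - k : ℕ) : ℤ) by omega],
        by rw [abs_of_nonneg (by omega : (0:ℤ) ≤ (ν:ℤ) - k)]; omega⟩
    · refine ⟨k - ν, ?_, by rw [abs_of_nonpos (by omega : ((ν:ℤ) - k) ≤ 0)]; omega⟩
      rw [show ((ν : ℤ) - k) = -((k - ν : ℕ) : ℤ) by omega, qbrace_neg]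
  obtain ⟨j, hj, hjabs⟩ := habs
  have hdeg : (normsq ν k).intDegree = (k : ℤ) * (2 * ν - k) + ν - j := by
    unfold normsq
    rw [hj, RF.intDegree_div (mul_ne_zero (qbinom_ne _ _) (qbrace_ne _)) (qbrace_ne _),
      RatFunc.intDegree_mul (qbinom_ne _ _) (qbrace_ne _),
      qbinom_intDegree _ _ hk, qbrace_intDegree, qbrace_intDegree]
    push_cast
    ring
  constructor
  · unfold degY
    rw [hdeg]
    rcases le_or_gt k ν with h | h
    · rw [if_pos h]
      have : (j : ℤ) = (ν : ℤ) - k := by rw [hjabs]; rw [abs_of_nonneg (by omega)]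
      rw [this]
      push_cast
      ring
    · rw [if_neg (by omega)]
      have : (j : ℤ) = (k : ℤ) - ν := by rw [hjabs]; rw [abs_of_nonpos (by omega)]; ring
      rw [this]
      push_cast
      ring
  · have hlc : lcoef (normsq ν k) = lcoef (qbrace (ν : ℤ)) / lcoef (qbrace (j : ℤ)) := by
      unfold normsq
      rw [hj, lcoef_div (qbrace_ne _), lcoef_mul (qbinom_ne _ _) (qbrace_ne _), qbinom_lcoef]
      ring
    unfold lcY
    by_cases hcase : k = ν ∧ 0 < ν
    · obtain ⟨rfl, hν⟩ := hcase
      have hj0 : j = 0 := by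
        rw [sub_self, abs_zero] at hjabs; omega
      rw [if_pos ⟨rfl, hν⟩]
      rw [hlc, hj0, Nat.cast_zero, qbrace_lcoef_zero, qbrace_lcoef_pos k hν]
      rw [show ((1 : ℂ) / 2) = ((1 / 2 : ℝ) : ℂ) by push_cast; ring]
      rw [Complex.ofReal_re]
      rw [show (1 / 2 : ℝ) = 2⁻¹ by norm_num, Real.sqrt_inv]
    · rw [if_neg hcase]
      have h1 : lcoef (normsq ν k) = 1 := by
        rcases Nat.eq_zero_or_pos ν with rfl | hν
        · have hj0 : j = 0 := by
            have : (0:ℤ) - k ≤ 0 := by omega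
            rw [abs_of_nonpos (by push_cast; omega)] at hjabs
            omega
          rw [hlc, hj0, Nat.cast_zero, qbrace_lcoef_zero]
          norm_num
        · have hkν : k ≠ ν := by
            intro h; exact hcase ⟨h, hν⟩
          have hjpos : 0 < j := by
            rcases le_or_gt k ν with h | h
            · rw [abs_of_nonneg (by push_cast; omega)] at hjabs; omega
            · rw [abs_of_nonpos (by push_cast; omega)] at hjabs; omega
          rw [hlc, qbrace_lcoef_pos ν hν, qbrace_lcoef_pos j hjpos]
          norm_num
      rw [h1]
      simp

end
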